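/- arXiv:2110.13452 — 3 statements merged into one kernel-verified Lean document; each statement's English description precedes it below -/
import Mathlib

section
/- Let d ≥ 1, let σ > 0, let ε > 0, and let a, a* ∈ ℝ^d. Then MMD(N(·; 0, aaᵀ+ε²I), N(·; 0, a*a*ᵀ+ε²I)) = det((1/σ²)(2aaᵀ + 2ε²I) + I)^{-1/2} + det((1/σ²)(2a*a*ᵀ + 2ε²I) + I)^{-1/2} − 2 det((1/σ²)(aaᵀ + a*a*ᵀ + 2ε²I) + I)^{-1/2}. -/
open MeasureTheory Matrix Real

/-- The multivariate Gaussian density `N(z; μ, Σ)` on `ℝ^d`. -/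
noncomputable def gaussianDensity {d : ℕ} (μ : EuclideanSpace ℝ (Fin d))
    (S : Matrix (Fin d) (Fin d) ℝ) (z : EuclideanSpace ℝ (Fin d)) : ℝ :=
  (2 * Real.pi) ^ (-(d : ℝ) / 2) * S.det ^ (-(1 : ℝ) / 2) *
    Real.exp (-(1 / 2) * ((z - μ) ⬝ᵥ (S⁻¹ *ᵥ (z - μ))))

/-- The Gaussian RBF kernel with width parameter `σ`. -/
noncomputable def rbfKernel {d : ℕ} (σ : ℝ) (x y : EuclideanSpace ℝ (Fin d)) : ℝ :=
  Real.exp (-‖x - y‖ ^ 2 / (2 * σ ^ 2))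

/-- The population MMD objective between two densities `p` and `q` on `ℝ^d`. -/
noncomputable def mmd {d : ℕ} (σ : ℝ) (p q : EuclideanSpace ℝ (Fin d) → ℝ) : ℝ :=
  (∫ x, ∫ x', rbfKernel σ x x' * p x * p x') +
    (∫ y, ∫ y', rbfKernel σ y y' * q y * q y') -
    2 * ∫ x, ∫ y, rbfKernel σ x y * p x * q y


/-!
Each term of the MMD is a double integral `∫∫ k(x, y) N(x; 0, S) N(y; 0, T)`. With `c = σ⁻²`,
completing the square in `y` gives `det (1 + c T)^{-1/2} exp (-½ xᵀ (c (1 + c T)⁻¹) x)`, where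
`c (T⁻¹ + c)⁻¹ = 1 - (1 + c T)⁻¹` simplifies the exponent; a second Gaussian integral in `x`
then produces `det (1 + c T)^{-1/2} det (1 + c S (1 + c T)⁻¹)^{-1/2} = det (1 + c (S + T))^{-1/2}`.
The Gaussian integral `∫ exp (-½ xᵀ Q x) = (2π)^{d/2} (det Q)^{-1/2}` itself follows from the
isotropic one by the substitution `x ↦ Q^{1/2} x`.
-/

open scoped MatrixOrder

section GaussianIntegral

variable {ι : Type*} [Fintype ι]

lemma EuclideanSpace.norm_sq_eq_dotProduct (x : EuclideanSpace ℝ ι) : ‖x‖ ^ 2 = x ⬝ᵥ x := by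
  rw [← real_inner_self_eq_norm_sq, EuclideanSpace.inner_eq_star_dotProduct, star_trivial]

variable [DecidableEq ι]

lemma integral_comp_toLpLin {M : Matrix ι ι ℝ} (hM : M.det ≠ 0)
    (f : EuclideanSpace ℝ ι → ℝ) :
    ∫ x, f (Matrix.toLpLin 2 2 M x) = |M.det|⁻¹ * ∫ x, f x := by
  rw [← LinearMap.det_toLpLin 2] at hM ⊢
  have hinj : LinearMap.ker (Matrix.toLpLin 2 2 M) = ⊥ :=
    (LinearMap.isUnit_iff_ker_eq_bot _).mp ((LinearMap.isUnit_iff_isUnit_det _).mpr hM.isUnit)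
  rw [← (LinearMap.isClosedEmbedding_of_injective hinj).measurableEmbedding.integral_map,
    Measure.map_linearMap_addHaar_eq_smul_addHaar _ hM, integral_smul_measure,
    ENNReal.toReal_ofReal (by positivity), abs_inv, smul_eq_mul]

lemma integral_exp_neg_half_dotProduct_mulVec {Q : Matrix ι ι ℝ} (hQ : Q.PosDef) :
    ∫ x : EuclideanSpace ℝ ι, rexp (-(1 / 2) * (x ⬝ᵥ Q *ᵥ x))
      = (2 * π) ^ ((Fintype.card ι : ℝ) / 2) * Q.det ^ (-(1 : ℝ) / 2) := by
  set P := CFC.sqrt Q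
  have hP : P.PosSemidef := (CFC.sqrt_nonneg Q).posSemidef
  have hPP : P * P = Q := CFC.sqrt_mul_sqrt_self Q hQ.posSemidef.nonneg
  have hdetP : P.det = √Q.det := by
    rw [← hPP, Matrix.det_mul, Real.sqrt_mul_self hP.det_nonneg]
  have hPd : P.det ≠ 0 := by rw [hdetP]; exact (Real.sqrt_pos.mpr hQ.det_pos).ne'
  have hquad (x : EuclideanSpace ℝ ι) : x ⬝ᵥ Q *ᵥ x = ‖Matrix.toLpLin 2 2 P x‖ ^ 2 := by
    rw [EuclideanSpace.norm_sq_eq_dotProduct, Matrix.toLpLin_apply, WithLp.ofLp_toLp, ← hPP,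
      ← Matrix.mulVec_mulVec, Matrix.dotProduct_mulVec, ← Matrix.mulVec_transpose,
      ← Matrix.conjTranspose_eq_transpose_of_trivial, hP.isHermitian.eq]
  simp_rw [hquad]
  rw [integral_comp_toLpLin hPd (fun u => rexp (-(1 / 2) * ‖u‖ ^ 2)),
    GaussianFourier.integral_rexp_neg_mul_sq_norm (by norm_num), finrank_euclideanSpace,
    abs_of_nonneg hP.det_nonneg, hdetP, Real.sqrt_eq_rpow, ← Real.rpow_neg hQ.det_pos.le]
  ring_nf

lemma integral_exp_neg_half_dotProduct_mulVec_add_dotProduct {Q : Matrix ι ι ℝ} (hQ : Q.PosDef)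
    (b : ι → ℝ) :
    ∫ x : EuclideanSpace ℝ ι, rexp (-(1 / 2) * (x ⬝ᵥ Q *ᵥ x) + b ⬝ᵥ x)
      = (2 * π) ^ ((Fintype.card ι : ℝ) / 2) * Q.det ^ (-(1 : ℝ) / 2)
          * rexp (1 / 2 * (b ⬝ᵥ Q⁻¹ *ᵥ b)) := by
  set m := Q⁻¹ *ᵥ b
  have hQm : Q *ᵥ m = b := by
    rw [Matrix.mulVec_mulVec, Matrix.mul_nonsing_inv _ hQ.det_pos.ne'.isUnit, Matrix.one_mulVec]
  have hmQ (x : ι → ℝ) : m ⬝ᵥ Q *ᵥ x = b ⬝ᵥ x := by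
    rw [Matrix.dotProduct_mulVec, ← Matrix.mulVec_transpose,
      ← Matrix.conjTranspose_eq_transpose_of_trivial, hQ.isHermitian.eq, hQm]
  have hsquare (x : ι → ℝ) :
      -(1 / 2) * ((x + m) ⬝ᵥ Q *ᵥ (x + m)) + b ⬝ᵥ (x + m)
        = 1 / 2 * (b ⬝ᵥ m) + -(1 / 2) * (x ⬝ᵥ Q *ᵥ x) := by
    simp only [Matrix.mulVec_add, dotProduct_add, add_dotProduct, hmQ, hQm, dotProduct_comm x b,
      dotProduct_comm m b]
    ring
  rw [← integral_add_right_eq_self _ (WithLp.toLp 2 m)]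
  beta_reduce
  simp only [WithLp.ofLp_add, hsquare, Real.exp_add]
  rw [integral_const_mul, integral_exp_neg_half_dotProduct_mulVec hQ]
  ring

end GaussianIntegral

lemma Matrix.smul_inv_inv_add_smul_one {ι K : Type*} [Fintype ι] [DecidableEq ι] [Field K]
    {T : Matrix ι ι K} (c : K) (hT : IsUnit T.det) (hU : IsUnit (1 + c • T).det) :
    c • (T⁻¹ + c • 1)⁻¹ = 1 - (1 + c • T)⁻¹ := by
  have hfactor : T⁻¹ + c • 1 = T⁻¹ * (1 + c • T) := by
    rw [Matrix.mul_add, Matrix.mul_one, Matrix.mul_smul, Matrix.nonsing_inv_mul _ hT]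
  rw [hfactor]
  calc c • (T⁻¹ * (1 + c • T))⁻¹ = (1 + c • T)⁻¹ * (1 + c • T - 1) := by
        rw [Matrix.mul_inv_rev, Matrix.nonsing_inv_nonsing_inv _ hT, add_sub_cancel_left,
          Matrix.mul_smul]
    _ = 1 - (1 + c • T)⁻¹ := by
        rw [Matrix.mul_sub, Matrix.nonsing_inv_mul _ hU, Matrix.mul_one]

lemma Matrix.PosDef.det_one_add_mul_pos {ι : Type*} [Fintype ι] [DecidableEq ι]
    {S P : Matrix ι ι ℝ} (hS : S.PosDef) (hP : P.PosSemidef) : 0 < (1 + S * P).det := by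
  rw [← Matrix.mul_nonsing_inv S hS.det_pos.ne'.isUnit, ← Matrix.mul_add, Matrix.det_mul]
  exact mul_pos hS.det_pos (hS.inv.add_posSemidef hP).det_pos

section GaussianDensity

variable {d : ℕ}

lemma gaussianDensity_zero (S : Matrix (Fin d) (Fin d) ℝ) (x : EuclideanSpace ℝ (Fin d)) :
    gaussianDensity 0 S x
      = (2 * π) ^ (-(d : ℝ) / 2) * S.det ^ (-(1 : ℝ) / 2) * rexp (-(1 / 2) * (x ⬝ᵥ S⁻¹ *ᵥ x)) := by
  simp only [gaussianDensity, sub_zero, WithLp.ofLp_zero]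

lemma integral_exp_mul_gaussianDensity {S P : Matrix (Fin d) (Fin d) ℝ} (hS : S.PosDef)
    (hP : P.PosSemidef) (b : Fin d → ℝ) :
    ∫ x : EuclideanSpace ℝ (Fin d), rexp (-(1 / 2) * (x ⬝ᵥ P *ᵥ x) + b ⬝ᵥ x) * gaussianDensity 0 S x
      = (1 + S * P).det ^ (-(1 : ℝ) / 2) * rexp (1 / 2 * (b ⬝ᵥ (S⁻¹ + P)⁻¹ *ᵥ b)) := by
  have hR : (S⁻¹ + P).PosDef := hS.inv.add_posSemidef hP
  have hcombine (x : EuclideanSpace ℝ (Fin d)) :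
      rexp (-(1 / 2) * (x ⬝ᵥ P *ᵥ x) + b ⬝ᵥ x) * gaussianDensity 0 S x
        = (2 * π) ^ (-(d : ℝ) / 2) * S.det ^ (-(1 : ℝ) / 2)
          * rexp (-(1 / 2) * (x ⬝ᵥ (S⁻¹ + P) *ᵥ x) + b ⬝ᵥ x) := by
    rw [gaussianDensity_zero, mul_comm, mul_assoc, ← Real.exp_add, Matrix.add_mulVec,
      dotProduct_add]
    ring_nf
  have hdet : S.det * (S⁻¹ + P).det = (1 + S * P).det := by
    rw [← Matrix.det_mul, Matrix.mul_add, Matrix.mul_nonsing_inv S hS.det_pos.ne'.isUnit]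
  have h2π : (2 * π) ^ (-(d : ℝ) / 2) * (2 * π) ^ ((d : ℝ) / 2) = 1 := by
    rw [← Real.rpow_add (by positivity), neg_div, neg_add_cancel, Real.rpow_zero]
  simp_rw [hcombine]
  rw [integral_const_mul, integral_exp_neg_half_dotProduct_mulVec_add_dotProduct hR,
    Fintype.card_fin, ← hdet, Real.mul_rpow hS.det_pos.le hR.det_pos.le]
  linear_combination (S.det ^ (-(1 : ℝ) / 2) * (S⁻¹ + P).det ^ (-(1 : ℝ) / 2)
    * rexp (1 / 2 * (b ⬝ᵥ (S⁻¹ + P)⁻¹ *ᵥ b))) * h2π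

lemma integral_exp_neg_sq_dist_mul_gaussianDensity {T : Matrix (Fin d) (Fin d) ℝ} (hT : T.PosDef)
    {c : ℝ} (hc : 0 ≤ c) (x : EuclideanSpace ℝ (Fin d)) :
    ∫ y, rexp (-(c / 2) * ‖x - y‖ ^ 2) * gaussianDensity 0 T y
      = (1 + c • T).det ^ (-(1 : ℝ) / 2) * rexp (-(1 / 2) * (x ⬝ᵥ (c • (1 + c • T)⁻¹) *ᵥ x)) := by
  have hU : (1 + c • T).PosDef := Matrix.PosDef.one.add_posSemidef (hT.posSemidef.smul hc)
  have hsplit (y : EuclideanSpace ℝ (Fin d)) :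
      rexp (-(c / 2) * ‖x - y‖ ^ 2) = rexp (-(c / 2) * (x ⬝ᵥ x))
        * rexp (-(1 / 2) * (y ⬝ᵥ (c • 1 : Matrix (Fin d) (Fin d) ℝ) *ᵥ y) + (c • x.ofLp) ⬝ᵥ y) := by
    rw [← Real.exp_add, EuclideanSpace.norm_sq_eq_dotProduct, WithLp.ofLp_sub]
    simp only [sub_dotProduct, dotProduct_sub, Matrix.smul_mulVec, Matrix.one_mulVec,
      dotProduct_smul, smul_dotProduct, smul_eq_mul, dotProduct_comm y.ofLp x.ofLp]
    ring_nf
  have hinv : c • (T⁻¹ + c • 1)⁻¹ = 1 - (1 + c • T)⁻¹ :=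
    Matrix.smul_inv_inv_add_smul_one c hT.det_pos.ne'.isUnit hU.det_pos.ne'.isUnit
  have hquad : (c • x.ofLp) ⬝ᵥ (T⁻¹ + c • 1)⁻¹ *ᵥ (c • x.ofLp)
      = c * (x ⬝ᵥ x) - c * (x ⬝ᵥ (1 + c • T)⁻¹ *ᵥ x) := by
    rw [Matrix.mulVec_smul, ← Matrix.smul_mulVec, hinv, smul_dotProduct, Matrix.sub_mulVec,
      Matrix.one_mulVec, dotProduct_sub, smul_eq_mul, mul_sub]
  simp_rw [hsplit, mul_assoc, integral_const_mul]
  rw [integral_exp_mul_gaussianDensity hT (Matrix.PosSemidef.one.smul hc), Matrix.mul_smul,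
    Matrix.mul_one, mul_left_comm, ← Real.exp_add, hquad, Matrix.smul_mulVec, dotProduct_smul,
    smul_eq_mul]
  ring_nf

lemma integral_integral_rbfKernel_mul_gaussianDensity (σ : ℝ) {S T : Matrix (Fin d) (Fin d) ℝ}
    (hS : S.PosDef) (hT : T.PosDef) :
    ∫ x, ∫ y, rbfKernel σ x y * gaussianDensity 0 S x * gaussianDensity 0 T y
      = ((1 / σ ^ 2) • (S + T) + 1).det ^ (-(1 : ℝ) / 2) := by
  set c := 1 / σ ^ 2
  have hc : 0 ≤ c := by positivity
  set U := 1 + c • T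
  have hU : U.PosDef := Matrix.PosDef.one.add_posSemidef (hT.posSemidef.smul hc)
  have hP : (c • U⁻¹).PosSemidef := hU.inv.posSemidef.smul hc
  have hinner (x : EuclideanSpace ℝ (Fin d)) :
      ∫ y, rbfKernel σ x y * gaussianDensity 0 S x * gaussianDensity 0 T y
        = U.det ^ (-(1 : ℝ) / 2)
          * (rexp (-(1 / 2) * (x ⬝ᵥ (c • U⁻¹) *ᵥ x) + 0 ⬝ᵥ x) * gaussianDensity 0 S x) := by
    have hk (y : EuclideanSpace ℝ (Fin d)) : rbfKernel σ x y = rexp (-(c / 2) * ‖x - y‖ ^ 2) := by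
      simp only [rbfKernel, c]; ring_nf
    simp_rw [hk, mul_right_comm _ (gaussianDensity 0 S x), integral_mul_const,
      integral_exp_neg_sq_dist_mul_gaussianDensity hT hc, zero_dotProduct, add_zero]
    ring
  simp_rw [hinner]
  rw [integral_const_mul, integral_exp_mul_gaussianDensity hS hP, zero_dotProduct, mul_zero,
    Real.exp_zero, mul_one, mul_comm,
    ← Real.mul_rpow (hS.det_one_add_mul_pos hP).le hU.det_pos.le, ← Matrix.det_mul,
    Matrix.add_mul, Matrix.one_mul, Matrix.mul_assoc, Matrix.smul_mul,
    Matrix.nonsing_inv_mul U hU.det_pos.ne'.isUnit, Matrix.mul_smul, Matrix.mul_one]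
  congr 2
  module

end GaussianDensity

lemma Matrix.posDef_vecMulVec_self_add_smul_one {ι : Type*} [Fintype ι] [DecidableEq ι]
    (a : ι → ℝ) {ε : ℝ} (hε : ε ≠ 0) : (vecMulVec a a + ε ^ 2 • 1).PosDef := by
  have ha := Matrix.posSemidef_vecMulVec_self_star a
  rw [star_trivial] at ha
  exact Matrix.PosDef.posSemidef_add ha (Matrix.PosDef.one.smul (by positivity))

theorem mmd_gaussian_covariance_general (d : ℕ) (σ : ℝ)
    (ε : ℝ) (hε : 0 < ε) (a astar : EuclideanSpace ℝ (Fin d)) :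
    mmd σ (gaussianDensity 0 (vecMulVec a a + ε ^ 2 • 1))
          (gaussianDensity 0 (vecMulVec astar astar + ε ^ 2 • 1))
      = (((1 / σ ^ 2) • ((2 : ℝ) • vecMulVec a a + (2 * ε ^ 2) • 1) + 1).det) ^ (-(1 : ℝ) / 2)
        + (((1 / σ ^ 2) • ((2 : ℝ) • vecMulVec astar astar + (2 * ε ^ 2) • 1) + 1).det) ^ (-(1 : ℝ) / 2)
        - 2 * (((1 / σ ^ 2) • (vecMulVec a a + vecMulVec astar astar + (2 * ε ^ 2) • 1) + 1).det) ^ (-(1 : ℝ) / 2) := by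
  have hS := Matrix.posDef_vecMulVec_self_add_smul_one a.ofLp hε.ne'
  have hT := Matrix.posDef_vecMulVec_self_add_smul_one astar.ofLp hε.ne'
  rw [mmd, integral_integral_rbfKernel_mul_gaussianDensity σ hS hS,
    integral_integral_rbfKernel_mul_gaussianDensity σ hT hT,
    integral_integral_rbfKernel_mul_gaussianDensity σ hS hT]
  congr 5 <;> module

theorem mmd_gaussian_covariance (d : ℕ) (hd : 1 ≤ d) (σ : ℝ) (hσ : 0 < σ)
    (ε : ℝ) (hε : 0 < ε) (a astar : EuclideanSpace ℝ (Fin d)) :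
    mmd σ (gaussianDensity 0 (vecMulVec a a + ε ^ 2 • 1))
          (gaussianDensity 0 (vecMulVec astar astar + ε ^ 2 • 1))
      = (((1 / σ ^ 2) • ((2 : ℝ) • vecMulVec a a + (2 * ε ^ 2) • 1) + 1).det) ^ (-(1 : ℝ) / 2)
        + (((1 / σ ^ 2) • ((2 : ℝ) • vecMulVec astar astar + (2 * ε ^ 2) • 1) + 1).det) ^ (-(1 : ℝ) / 2)
        - 2 * (((1 / σ ^ 2) • (vecMulVec a a + vecMulVec astar astar + (2 * ε ^ 2) • 1) + 1).det) ^ (-(1 : ℝ) / 2) :=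
  mmd_gaussian_covariance_general d σ ε hε a astar
end

section
/- Let d ≥ 1, let σ > 0, let ε ≥ 0, and let a* ∈ ℝ^d with a* ≠ 0. Set c := 2ε² + σ². Define g : ℝ^d → ℝ by g(a) := det((1/σ²)(2aaᵀ + 2ε²I) + I)^{-1/2} + det((1/σ²)(2a*a*ᵀ + 2ε²I) + I)^{-1/2} − 2 det((1/σ²)(aaᵀ + a*a*ᵀ + 2ε²I) + I)^{-1/2}. If a ∈ ℝ^d satisfies ∇g(a) = 0 and a ∉ {0, a*, −a*}, then aᵀa* = 0 and ‖a‖² = c·((‖a*‖² + c)^{1/3} − c^{1/3}) / (2 c^{1/3} − (‖a*‖² + c)^{1/3}). -/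
/-!
With `c = 2ε² + σ²` and `r = 1 / c`, each matrix in `g` is `(c / σ²) • (1 + r (u uᵀ + v vᵀ))`,
whose determinant is `(c / σ²) ^ d` times `(1 + r‖u‖²)(1 + r‖v‖²) - r²⟪u, v⟫²`. Hence `∇g(a)` is
a combination of `a` and `a*` whose coefficients involve `A₁ = (1 + 2r‖a‖²)^(-3/2)` and the
`-3/2` power `A₂` of the mixed determinant. Pairing `∇g(a) = 0` with `a*` gives
`⟪a, a*⟫ (A₂ - A₁) = 0`. If `A₁ = A₂`, then `a` and `a*` are collinear with equal norms, which
is excluded; so `⟪a, a*⟫ = 0`, and the remaining scalar equation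
`1 + 2r‖a‖² = (1 + r‖a‖²)(1 + r‖a*‖²)^(1/3)` is linear in `‖a‖²`.
-/

open Matrix
open scoped RealInnerProductSpace

theorem Matrix.det_one_add_smul_vecMulVec_add_vecMulVec {n R : Type*} [Fintype n] [DecidableEq n]
    [CommRing R] (r : R) (u v : n → R) :
    (1 + r • (vecMulVec u u + vecMulVec v v)).det =
      (1 + r * (u ⬝ᵥ u)) * (1 + r * (v ⬝ᵥ v)) - r ^ 2 * (u ⬝ᵥ v) ^ 2 := by
  -- Sylvester's identity `det (1 + U V) = det (1 + V U)` reduces this to the Gram matrix of `u, v`.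
  have hUV : r • (vecMulVec u u + vecMulVec v v) = (of ![u, v])ᵀ * (r • of ![u, v]) := by
    ext i j
    simp [Matrix.mul_apply, Fin.sum_univ_two, vecMulVec_apply, mul_add, mul_left_comm]
  rw [hUV, det_one_add_mul_comm, det_fin_two, smul_mul]
  simp only [Nat.succ_eq_add_one, Nat.reduceAdd, cons_mul, vecMul_transpose, cons_mulVec,
    dotProduct_comm v u, empty_mulVec, empty_mul, Equiv.symm_apply_apply, smul_of, smul_cons,
    smul_eq_mul, smul_empty, Fin.isValue, add_apply, one_apply_eq, of_apply, cons_val',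
    cons_val_zero, cons_val_fin_one, cons_val_one, ne_eq, zero_ne_one, not_false_eq_true,
    one_apply_ne, zero_add, one_ne_zero, sub_right_inj]
  ring

theorem Matrix.det_inv_sq_smul_add_one {n : Type*} [Fintype n] [DecidableEq n] {σ : ℝ}
    (hσ : σ ≠ 0) (ε : ℝ) (M : Matrix n n ℝ) :
    ((1 / σ ^ 2) • (M + (2 * ε ^ 2) • 1) + 1).det =
      ((2 * ε ^ 2 + σ ^ 2) / σ ^ 2) ^ Fintype.card n * (1 + (2 * ε ^ 2 + σ ^ 2)⁻¹ • M).det := by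
  have hc : 2 * ε ^ 2 + σ ^ 2 ≠ 0 := by positivity
  rw [← det_smul]
  congr 1
  ext i j
  by_cases hij : i = j
  · simp only [one_div, smul_add, hij, add_apply, smul_apply, smul_eq_mul, one_apply_eq, mul_one]
    field_simp
    ring
  · simp only [one_div, smul_add, add_apply, smul_apply, smul_eq_mul, ne_eq, hij,
      not_false_eq_true, one_apply_ne, mul_zero, add_zero, zero_add]
    field_simp

theorem HasGradientAt.const_mul {F : Type*} [NormedAddCommGroup F] [InnerProductSpace ℝ F]
    [CompleteSpace F] {f : F → ℝ} {f' x : F} (hf : HasGradientAt f f' x) (k : ℝ) :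
    HasGradientAt (fun y => k * f y) (k • f') x := by
  rw [hasGradientAt_iff_hasFDerivAt] at hf ⊢
  simpa using hf.const_mul k

theorem eq_mul_rpow_one_third_of_rpow_eq {q u z : ℝ} (hq : 0 < q) (hu : 0 < u) (hz : 0 < z)
    (h : q ^ (-(3 : ℝ) / 2) = z * (u * z) ^ (-(3 : ℝ) / 2)) : q = u * z ^ ((1 : ℝ) / 3) := by
  refine (Real.rpow_left_inj hq.le (by positivity) (by norm_num : -(3 : ℝ) / 2 ≠ 0)).1 ?_
  rw [h, Real.mul_rpow hu.le hz.le, Real.mul_rpow hu.le (by positivity), ← Real.rpow_mul hz.le,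
    show (1 : ℝ) / 3 * (-(3 : ℝ) / 2) = 1 + -(3 : ℝ) / 2 by norm_num, Real.rpow_add hz,
    Real.rpow_one]
  ring

theorem pos_and_eq_div_of_mul_eq_mul {c s C T : ℝ} (hc : 0 < c) (hs : 0 < s) (hC : 0 < C)
    (h : C * (c + 2 * s) = (c + s) * T) : 0 < 2 * C - T ∧ s = c * (T - C) / (2 * C - T) := by
  have hden : (2 * C - T) * (c + s) = C * c := by linear_combination h
  have hpos : 0 < 2 * C - T := by nlinarith
  refine ⟨hpos, (eq_div_iff hpos.ne').2 ?_⟩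
  linear_combination h

section

variable {E : Type*} [NormedAddCommGroup E] [InnerProductSpace ℝ E]

/-- `det (1 + r • (vecMulVec u u + vecMulVec v v))` in intrinsic form, see
`Matrix.det_one_add_smul_vecMulVec_add_vecMulVec`. -/
noncomputable def rankTwoDet (r : ℝ) (u v : E) : ℝ :=
  (1 + r * ‖u‖ ^ 2) * (1 + r * ‖v‖ ^ 2) - r ^ 2 * ⟪u, v⟫ ^ 2

theorem rankTwoDet_self (r : ℝ) (u : E) : rankTwoDet r u u = 1 + 2 * r * ‖u‖ ^ 2 := by
  rw [rankTwoDet, real_inner_self_eq_norm_sq]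
  ring

theorem one_le_rankTwoDet {r : ℝ} (hr : 0 ≤ r) (u v : E) : 1 ≤ rankTwoDet r u v := by
  have hcs : ⟪u, v⟫ ^ 2 ≤ ‖u‖ ^ 2 * ‖v‖ ^ 2 := by
    simpa [mul_pow, sq_abs] using pow_le_pow_left₀ (abs_nonneg _) (abs_real_inner_le_norm u v) 2
  unfold rankTwoDet
  nlinarith [mul_nonneg hr (sq_nonneg ‖u‖), mul_nonneg hr (sq_nonneg ‖v‖),
    mul_nonneg (sq_nonneg r) (sub_nonneg.2 hcs)]

theorem rankTwoDet_pos {r : ℝ} (hr : 0 ≤ r) (u v : E) : 0 < rankTwoDet r u v :=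
  zero_lt_one.trans_le (one_le_rankTwoDet hr u v)

theorem hasFDerivAt_rankTwoDet_left (r : ℝ) (v x : E) :
    HasFDerivAt (fun y => rankTwoDet r y v)
      (innerSL ℝ ((2 * r * (1 + r * ‖v‖ ^ 2)) • x - (2 * r ^ 2 * ⟪x, v⟫) • v)) x := by
  have hn := (hasStrictFDerivAt_norm_sq x).hasFDerivAt
  have hi : HasFDerivAt (fun y => ⟪y, v⟫) (innerSL ℝ v) x := by
    simpa [real_inner_comm] using (innerSL ℝ v).hasFDerivAt (x := x)
  refine ((((hn.const_mul r).const_add 1).mul_const (1 + r * ‖v‖ ^ 2)).sub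
    ((hi.pow 2).const_mul (r ^ 2))).congr_fderiv ?_
  ext y
  simp only [real_inner_comm, Nat.add_one_sub_one, pow_one, nsmul_eq_mul, Nat.cast_ofNat,
    _root_.sub_apply, _root_.smul_apply, coe_innerSL_apply, smul_eq_mul, map_sub, map_smul]
  ring

theorem hasFDerivAt_rankTwoDet_self (r : ℝ) (x : E) :
    HasFDerivAt (fun y => rankTwoDet r y y) (innerSL ℝ ((4 * r) • x)) x := by
  simp_rw [rankTwoDet_self]
  refine (((hasStrictFDerivAt_norm_sq x).hasFDerivAt.const_mul (2 * r)).const_add 1).congr_fderiv ?_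
  ext y
  simp only [_root_.smul_apply, coe_innerSL_apply, nsmul_eq_mul, Nat.cast_ofNat, smul_eq_mul,
    map_smul]
  ring

/-- The objective `g` divided by `det ((c / σ²) • 1) ^ (-1/2)`, with `r = 1 / c`. -/
noncomputable def rankOneMMD (r : ℝ) (b x : E) : ℝ :=
  rankTwoDet r x x ^ (-(1 : ℝ) / 2) + rankTwoDet r b b ^ (-(1 : ℝ) / 2)
    - 2 * rankTwoDet r x b ^ (-(1 : ℝ) / 2)

theorem hasGradientAt_rankOneMMD [CompleteSpace E] {r : ℝ} (hr : 0 ≤ r) (b x : E) :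
    HasGradientAt (rankOneMMD r b)
      ((2 * r) • ((rankTwoDet r x b ^ (-(3 : ℝ) / 2) * (1 + r * ‖b‖ ^ 2)
          - rankTwoDet r x x ^ (-(3 : ℝ) / 2)) • x
        - (r * ⟪x, b⟫ * rankTwoDet r x b ^ (-(3 : ℝ) / 2)) • b)) x := by
  have hexp : -(1 : ℝ) / 2 - 1 = -(3 : ℝ) / 2 := by norm_num
  have h₁ := (hasFDerivAt_rankTwoDet_self r x).rpow_const (Or.inl (rankTwoDet_pos hr x x).ne')
    (p := -(1 : ℝ) / 2)
  have h₂ := (hasFDerivAt_rankTwoDet_left r b x).rpow_const (Or.inl (rankTwoDet_pos hr x b).ne')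
    (p := -(1 : ℝ) / 2)
  rw [hexp] at h₁ h₂
  rw [hasGradientAt_iff_hasFDerivAt]
  refine ((h₁.add_const _).sub (h₂.const_mul 2)).congr_fderiv ?_
  ext y
  simp only [map_smul, map_sub, _root_.sub_apply, _root_.smul_apply, coe_innerSL_apply,
    smul_eq_mul, InnerProductSpace.toDual_apply_apply]
  ring

theorem eq_or_eq_neg_of_rankTwoDet_eq {r : ℝ} (hr : 0 < r) {x b : E} (hx : x ≠ 0)
    (hcol : ‖b‖ ^ 2 • x = ⟪x, b⟫ • b)
    (hdet : rankTwoDet r x x = rankTwoDet r x b) : x = b ∨ x = -b := by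
  have hgram : ‖b‖ ^ 2 * ‖x‖ ^ 2 = ⟪x, b⟫ ^ 2 := by
    simpa [inner_smul_left, real_inner_self_eq_norm_sq, real_inner_comm, sq] using
      congrArg (fun y => ⟪y, x⟫) hcol
  have hnorm : ‖b‖ ^ 2 = ‖x‖ ^ 2 := by
    rw [rankTwoDet_self, rankTwoDet] at hdet
    have : r * (‖b‖ ^ 2 - ‖x‖ ^ 2) = 0 := by linear_combination -hdet - r ^ 2 * hgram
    linarith [(mul_eq_zero.1 this).resolve_left hr.ne']
  have ht : ‖b‖ ^ 2 ≠ 0 := by rw [hnorm]; positivity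
  have hp2 : ⟪x, b⟫ ^ 2 = (‖b‖ ^ 2) ^ 2 := by rw [← hgram, ← hnorm, ← sq]
  rcases sq_eq_sq_iff_eq_or_eq_neg.1 hp2 with hp | hp
  · exact .inl (smul_right_injective E ht (by rwa [hp] at hcol))
  · exact .inr (smul_right_injective E ht (by rwa [hp, neg_smul, ← smul_neg] at hcol))

theorem inner_eq_zero_and_rankTwoDet_self_eq_of_gradient_rankOneMMD_eq_zero [CompleteSpace E]
    {r : ℝ} (hr : 0 < r) {b x : E} (hx : x ≠ 0) (hxb : x ≠ b) (hxnb : x ≠ -b)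
    (hcrit : gradient (rankOneMMD r b) x = 0) :
    ⟪x, b⟫ = 0 ∧ rankTwoDet r x x = (1 + r * ‖x‖ ^ 2) * (1 + r * ‖b‖ ^ 2) ^ ((1 : ℝ) / 3) := by
  have hQ₁ := rankTwoDet_pos hr.le x x
  have hQ₂ := rankTwoDet_pos hr.le x b
  set A₁ := rankTwoDet r x x ^ (-(3 : ℝ) / 2)
  set A₂ := rankTwoDet r x b ^ (-(3 : ℝ) / 2)
  have hA₂ : 0 < A₂ := Real.rpow_pos_of_pos hQ₂ _
  have hvec : (A₂ * (1 + r * ‖b‖ ^ 2) - A₁) • x = (r * ⟪x, b⟫ * A₂) • b := by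
    rw [(hasGradientAt_rankOneMMD hr.le b x).gradient, smul_eq_zero, sub_eq_zero] at hcrit
    exact hcrit.resolve_left (by positivity)
  have hpair : ⟪x, b⟫ * (A₂ - A₁) = 0 := by
    have := congrArg (fun y => ⟪y, b⟫) hvec
    simp only [inner_smul_left, real_inner_self_eq_norm_sq, conj_trivial] at this
    linear_combination this
  have hp : ⟪x, b⟫ = 0 := by
    by_contra hp
    have hA : A₁ = A₂ := (sub_eq_zero.1 ((mul_eq_zero.1 hpair).resolve_left hp)).symm
    have hcol : ‖b‖ ^ 2 • x = ⟪x, b⟫ • b := by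
      refine smul_right_injective E (show r * A₂ ≠ 0 by positivity) ?_
      simp only [smul_smul]
      convert hvec using 2
      · rw [hA]
        ring
      · ring
    have hdet : rankTwoDet r x x = rankTwoDet r x b :=
      (Real.rpow_left_inj hQ₁.le hQ₂.le (by norm_num)).1 hA
    exact (eq_or_eq_neg_of_rankTwoDet_eq hr hx hcol hdet).elim hxb hxnb
  refine ⟨hp, eq_mul_rpow_one_third_of_rpow_eq hQ₁ (by positivity) (by positivity) ?_⟩
  rw [hp, mul_zero, zero_mul, zero_smul, smul_eq_zero, sub_eq_zero] at hvec
  have hQ₂' : rankTwoDet r x b = (1 + r * ‖x‖ ^ 2) * (1 + r * ‖b‖ ^ 2) := by simp [rankTwoDet, hp]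
  rw [← hQ₂']
  exact (hvec.resolve_right hx).symm.trans (mul_comm _ _)

end

theorem EuclideanSpace.dotProduct_eq_inner {n : Type*} [Fintype n] (x y : EuclideanSpace ℝ n) :
    x.ofLp ⬝ᵥ y.ofLp = ⟪x, y⟫ := by
  rw [EuclideanSpace.inner_eq_star_dotProduct, star_trivial, dotProduct_comm]

theorem EuclideanSpace.det_inv_sq_smul_vecMulVec_add_one {d : ℕ} {σ : ℝ} (hσ : σ ≠ 0) (ε : ℝ)
    (x y : EuclideanSpace ℝ (Fin d)) :
    ((1 / σ ^ 2) • (vecMulVec x x + vecMulVec y y + (2 * ε ^ 2) • 1) + 1).det =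
      ((2 * ε ^ 2 + σ ^ 2) / σ ^ 2) ^ d * rankTwoDet (2 * ε ^ 2 + σ ^ 2)⁻¹ x y := by
  rw [det_inv_sq_smul_add_one hσ, det_one_add_smul_vecMulVec_add_vecMulVec, Fintype.card_fin,
    dotProduct_eq_inner, dotProduct_eq_inner, dotProduct_eq_inner, real_inner_self_eq_norm_sq,
    real_inner_self_eq_norm_sq, rankTwoDet]

theorem mmd_covariance_other_critical_points_general (d : ℕ) (σ : ℝ) (hσ : 0 < σ)
    (ε : ℝ) (astar : EuclideanSpace ℝ (Fin d))
    (c : ℝ) (hc : c = 2 * ε ^ 2 + σ ^ 2)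
    (g : EuclideanSpace ℝ (Fin d) → ℝ)
    (hg : g = fun a : EuclideanSpace ℝ (Fin d) =>
      (((1 / σ ^ 2) • ((2 : ℝ) • vecMulVec a a + (2 * ε ^ 2) • 1) + 1).det) ^ (-(1 : ℝ) / 2)
      + (((1 / σ ^ 2) • ((2 : ℝ) • vecMulVec astar astar + (2 * ε ^ 2) • 1) + 1).det) ^ (-(1 : ℝ) / 2)
      - 2 * (((1 / σ ^ 2) • (vecMulVec a a + vecMulVec astar astar + (2 * ε ^ 2) • 1) + 1).det) ^ (-(1 : ℝ) / 2))
    (a : EuclideanSpace ℝ (Fin d)) (hcrit : gradient g a = 0)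
    (ha0 : a ≠ 0) (ha1 : a ≠ astar) (ha2 : a ≠ -astar) :
    a ⬝ᵥ astar = 0 ∧
      0 < 2 * c ^ ((1 : ℝ) / 3) - (‖astar‖ ^ 2 + c) ^ ((1 : ℝ) / 3) ∧
      ‖a‖ ^ 2 = c * ((‖astar‖ ^ 2 + c) ^ ((1 : ℝ) / 3) - c ^ ((1 : ℝ) / 3)) /
        (2 * c ^ ((1 : ℝ) / 3) - (‖astar‖ ^ 2 + c) ^ ((1 : ℝ) / 3)) := by
  have hc₀ : 0 < c := by rw [hc]; positivity
  set K := ((c / σ ^ 2) ^ d) ^ (-(1 : ℝ) / 2)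
  have hgK : g = fun x => K * rankOneMMD c⁻¹ astar x := by
    have hK : 0 ≤ (c / σ ^ 2) ^ d := by positivity
    have hQ := rankTwoDet_pos (inv_nonneg.2 hc₀.le) (E := EuclideanSpace ℝ (Fin d))
    funext x
    simp only [hg, two_smul, EuclideanSpace.det_inv_sq_smul_vecMulVec_add_one hσ.ne', ← hc,
      Real.mul_rpow hK (hQ _ _).le, rankOneMMD]
    ring
  have hgrad : gradient (rankOneMMD c⁻¹ astar) a = 0 := by
    have hr := hasGradientAt_rankOneMMD (inv_nonneg.2 hc₀.le) astar a
    have h := (hr.const_mul K).gradient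
    rw [← hr.gradient, ← hgK, hcrit] at h
    exact (smul_eq_zero.1 h.symm).resolve_left (by positivity)
  obtain ⟨horth, hdet⟩ := inner_eq_zero_and_rankTwoDet_self_eq_of_gradient_rankOneMMD_eq_zero
    (inv_pos.2 hc₀) ha0 ha1 ha2 hgrad
  refine ⟨by rwa [EuclideanSpace.dotProduct_eq_inner],
    pos_and_eq_div_of_mul_eq_mul hc₀ (by positivity) (by positivity) ?_⟩
  rw [rankTwoDet_self, show 1 + c⁻¹ * ‖astar‖ ^ 2 = (‖astar‖ ^ 2 + c) / c by field_simp; ring,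
    Real.div_rpow (by positivity) hc₀.le] at hdet
  field_simp at hdet
  linear_combination hdet

theorem mmd_covariance_other_critical_points (d : ℕ) (hd : 1 ≤ d) (σ : ℝ) (hσ : 0 < σ)
    (ε : ℝ) (hε : 0 ≤ ε) (astar : EuclideanSpace ℝ (Fin d)) (hastar : astar ≠ 0)
    (c : ℝ) (hc : c = 2 * ε ^ 2 + σ ^ 2)
    (g : EuclideanSpace ℝ (Fin d) → ℝ)
    (hg : g = fun a : EuclideanSpace ℝ (Fin d) =>
      (((1 / σ ^ 2) • ((2 : ℝ) • vecMulVec a a + (2 * ε ^ 2) • 1) + 1).det) ^ (-(1 : ℝ) / 2)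
      + (((1 / σ ^ 2) • ((2 : ℝ) • vecMulVec astar astar + (2 * ε ^ 2) • 1) + 1).det) ^ (-(1 : ℝ) / 2)
      - 2 * (((1 / σ ^ 2) • (vecMulVec a a + vecMulVec astar astar + (2 * ε ^ 2) • 1) + 1).det) ^ (-(1 : ℝ) / 2))
    (a : EuclideanSpace ℝ (Fin d)) (hcrit : gradient g a = 0)
    (ha0 : a ≠ 0) (ha1 : a ≠ astar) (ha2 : a ≠ -astar) :
    a ⬝ᵥ astar = 0 ∧
      0 < 2 * c ^ ((1 : ℝ) / 3) - (‖astar‖ ^ 2 + c) ^ ((1 : ℝ) / 3) ∧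
      ‖a‖ ^ 2 = c * ((‖astar‖ ^ 2 + c) ^ ((1 : ℝ) / 3) - c ^ ((1 : ℝ) / 3)) /
        (2 * c ^ ((1 : ℝ) / 3) - (‖astar‖ ^ 2 + c) ^ ((1 : ℝ) / 3)) :=
  mmd_covariance_other_critical_points_general d σ hσ ε astar c hc g hg a hcrit ha0 ha1 ha2
end

section
/- Let d ≥ 2, let σ > 0, let ε ≥ 0, and let a* ∈ ℝ^d with ‖a*‖ = 1. Set c := 2ε² + σ² and assume 2c^{1/3} > (1 + c)^{1/3}. Define g : ℝ^d → ℝ by g(a) := det((1/σ²)(2aaᵀ + 2ε²I) + I)^{-1/2} + det((1/σ²)(2a*a*ᵀ + 2ε²I) + I)^{-1/2} − 2 det((1/σ²)(aaᵀ + a*a*ᵀ + 2ε²I) + I)^{-1/2}. If a ∈ ℝ^d satisfies aᵀa* = 0 and ‖a‖² = c·((1 + c)^{1/3} − c^{1/3}) / (2 c^{1/3} − (1 + c)^{1/3}), then the second derivative at t = 0 of the map t ↦ g(a + t·a*) is strictly negative; in particular such a critical point is a strict saddle of g and not a local minimum. -/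
/-!
Along the line `t ↦ a + t • a*` through a point `a ⟂ a*`, the determinant lemma for rank-two
updates of `β • 1` makes both `a`-dependent determinants of `g` affine in `t²`, so
`g (a + t • a*) = φ (t²)` with `φ s = C + (α + 2κs)^(-1/2) - 2 (α' + κs)^(-1/2)`.
Hence the first derivative vanishes at `0` and the second one is
`2 φ' 0 = 2κ (α'^(-3/2) - α^(-3/2))`, negative exactly when `α < α'`, i.e. when
`c ‖a‖² < c + ‖a‖²`. At the critical radius this follows from the identity
`(c + r - c r)(2x - y) = x⁴ y (y² - x²)`, where `x³ = c` and `y³ = 1 + c`.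
By the second-derivative test `0` is then a local maximum of `t ↦ g (a + t • a*)`; were it also
a local minimum, the function would be locally constant and its second derivative would vanish.
-/

open Matrix Filter Topology

section TwoRankUpdate

variable {K ι : Type*} [Field K] [Fintype ι] [DecidableEq ι]

theorem det_smul_one_add_vecMulVec_add_vecMulVec {β : K} (hβ : β ≠ 0)
    (hι : 2 ≤ Fintype.card ι) (γ δ : K) (u v : ι → K) :
    (β • (1 : Matrix ι ι K) + γ • vecMulVec u u + δ • vecMulVec v v).det =
      β ^ (Fintype.card ι - 2) *
        ((β + γ * (u ⬝ᵥ u)) * (β + δ * (v ⬝ᵥ v)) - γ * δ * (u ⬝ᵥ v) ^ 2) := by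
  let W : Matrix ι (Fin 2) K := (Matrix.of ![u, v])ᵀ
  let M : Matrix (Fin 2) ι K := Matrix.of ![γ • u, δ • v]
  have hWM : W * M = γ • vecMulVec u u + δ • vecMulVec v v := by
    ext i j
    simp [W, M, mul_apply, Fin.sum_univ_two, vecMulVec_apply, mul_left_comm]
  have hMW : M * W = !![γ * (u ⬝ᵥ u), γ * (u ⬝ᵥ v); δ * (u ⬝ᵥ v), δ * (v ⬝ᵥ v)] := by
    ext k l
    fin_cases k <;> fin_cases l <;>
      simp [W, M, mul_apply, dotProduct, Finset.mul_sum, mul_assoc, mul_comm (u _)]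
  obtain ⟨m, hm⟩ := Nat.exists_eq_add_of_le' hι
  calc _ = (β • (1 + W * (β⁻¹ • M))).det := by
        rw [Matrix.mul_smul, hWM, smul_add, smul_smul, mul_inv_cancel₀ hβ, one_smul, add_assoc]
    _ = β ^ Fintype.card ι * (1 + β⁻¹ • (M * W)).det := by
        rw [det_smul, det_one_add_mul_comm, Matrix.smul_mul]
    _ = _ := by
        rw [hMW, det_fin_two, hm, Nat.add_sub_cancel, pow_add]
        simp only [smul_of, smul_cons, smul_eq_mul, smul_empty, Matrix.add_apply, of_apply,
          cons_val', cons_val_zero, cons_val_one, cons_val_fin_one, one_apply_eq, one_apply_ne,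
          ne_eq, zero_ne_one, one_ne_zero, not_false_eq_true, zero_add]
        field_simp

variable {s e : K} (hse : s * e + 1 ≠ 0) (hι : 2 ≤ Fintype.card ι) (u v : ι → K)
include hse hι

theorem det_smul_vecMulVec_add_smul_one_add_one (γ : K) :
    (s • (γ • vecMulVec u u + e • (1 : Matrix ι ι K)) + 1).det =
      (s * e + 1) ^ (Fintype.card ι - 1) * (s * e + 1 + s * γ * (u ⬝ᵥ u)) := by
  obtain ⟨m, hm⟩ := Nat.exists_eq_add_of_le' hι
  rw [show s • (γ • vecMulVec u u + e • (1 : Matrix ι ι K)) + 1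
      = (s * e + 1) • 1 + (s * γ) • vecMulVec u u + (0 : K) • vecMulVec u u by module,
    det_smul_one_add_vecMulVec_add_vecMulVec hse hι, hm, Nat.add_sub_cancel,
    show m + 2 - 1 = m + 1 by omega]
  ring

theorem det_smul_vecMulVec_add_vecMulVec_add_smul_one_add_one :
    (s • (vecMulVec u u + vecMulVec v v + e • (1 : Matrix ι ι K)) + 1).det =
      (s * e + 1) ^ (Fintype.card ι - 2) *
        ((s * e + 1 + s * (u ⬝ᵥ u)) * (s * e + 1 + s * (v ⬝ᵥ v)) - s ^ 2 * (u ⬝ᵥ v) ^ 2) := by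
  rw [show s • (vecMulVec u u + vecMulVec v v + e • (1 : Matrix ι ι K)) + 1
      = (s * e + 1) • 1 + s • vecMulVec u u + s • vecMulVec v v by module,
    det_smul_one_add_vecMulVec_add_vecMulVec hse hι]
  ring

end TwoRankUpdate

section Calculus

theorem not_isLocalMin_of_deriv_deriv_neg {f : ℝ → ℝ} {x₀ : ℝ} (hf : deriv (deriv f) x₀ < 0)
    (hd : deriv f x₀ = 0) (hc : ContinuousAt f x₀) : ¬ IsLocalMin f x₀ := by
  intro hmin
  have hconst : f =ᶠ[𝓝 x₀] fun _ => f x₀ := by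
    filter_upwards [hmin, isLocalMax_of_deriv_deriv_neg hf hd hc] with x hx₁ hx₂
    exact le_antisymm hx₂ hx₁
  have h0 : deriv (deriv f) x₀ = 0 := by simpa using hconst.deriv.deriv_eq
  exact hf.ne h0

theorem hasDerivAt_sub_smul_of_continuousAt {𝕜 E : Type*} [NontriviallyNormedField 𝕜]
    [NormedAddCommGroup E] [NormedSpace 𝕜 E] {h : 𝕜 → E} {x₀ : 𝕜} (hh : ContinuousAt h x₀) :
    HasDerivAt (fun t => (t - x₀) • h t) (h x₀) x₀ := by
  rw [hasDerivAt_iff_tendsto_slope]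
  refine (hh.tendsto.mono_left nhdsWithin_le_nhds).congr' ?_
  filter_upwards [self_mem_nhdsWithin] with t (ht : t ≠ x₀)
  rw [slope_def_module, sub_self, zero_smul, sub_zero, smul_smul,
    inv_mul_cancel₀ (sub_ne_zero.2 ht), one_smul]

theorem HasDerivAt.comp_sq {φ : ℝ → ℝ} {φ' t : ℝ} (hφ : HasDerivAt φ φ' (t ^ 2)) :
    HasDerivAt (fun t => φ (t ^ 2)) (t * (2 * φ')) t :=
  (HasDerivAt.comp (h := fun t : ℝ => t ^ 2) t hφ (hasDerivAt_pow 2 t)).congr_deriv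
    (by ring)

variable {φ φ' : ℝ → ℝ}

theorem deriv_comp_sq (hφ : ∀ s, 0 ≤ s → HasDerivAt φ (φ' s) s) :
    deriv (fun t => φ (t ^ 2)) = fun t => t * (2 * φ' (t ^ 2)) :=
  funext fun t => (hφ _ (sq_nonneg t)).comp_sq.deriv

theorem deriv_deriv_comp_sq_zero (hφ : ∀ s, 0 ≤ s → HasDerivAt φ (φ' s) s)
    (hφ' : ContinuousAt φ' 0) : deriv (deriv fun t => φ (t ^ 2)) 0 = 2 * φ' 0 := by
  have hcont : ContinuousAt (fun t : ℝ => 2 * φ' (t ^ 2)) 0 :=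
    (ContinuousAt.comp (by simpa using hφ') (continuous_pow 2).continuousAt).const_mul 2
  simpa [deriv_comp_sq hφ] using (hasDerivAt_sub_smul_of_continuousAt hcont).deriv

theorem hasDerivAt_add_mul_rpow_neg_half {p q s : ℝ} (h : 0 < p + q * s) :
    HasDerivAt (fun s => (p + q * s) ^ (-(1 : ℝ) / 2))
      (-(q / 2) * (p + q * s) ^ (-(3 : ℝ) / 2)) s := by
  refine (((hasDerivAt_id' s).const_mul q).const_add p |>.rpow_const (p := -(1 : ℝ) / 2)
    (Or.inl h.ne')).congr_deriv ?_
  rw [show -(1 : ℝ) / 2 - 1 = -(3 : ℝ) / 2 by norm_num]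
  ring

end Calculus

theorem deriv_deriv_neg_and_not_isLocalMin_of_inv_sqrt {f : ℝ → ℝ} {C α α' κ : ℝ} (hα : 0 < α)
    (hαα' : α < α') (hκ : 0 < κ)
    (hf : ∀ t, f t = C + (α + 2 * κ * t ^ 2) ^ (-(1 : ℝ) / 2)
      - 2 * (α' + κ * t ^ 2) ^ (-(1 : ℝ) / 2)) :
    deriv (deriv f) 0 < 0 ∧ ¬ IsLocalMin f 0 := by
  set φ : ℝ → ℝ := fun s => C + (α + 2 * κ * s) ^ (-(1 : ℝ) / 2)
      - 2 * (α' + κ * s) ^ (-(1 : ℝ) / 2)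
  set φ' : ℝ → ℝ := fun s => κ * ((α' + κ * s) ^ (-(3 : ℝ) / 2) - (α + 2 * κ * s) ^ (-(3 : ℝ) / 2))
  have hfφ : f = fun t => φ (t ^ 2) := funext hf
  have hφ : ∀ s, 0 ≤ s → HasDerivAt φ (φ' s) s := by
    intro s hs
    have h₁ := hasDerivAt_add_mul_rpow_neg_half (p := α) (q := 2 * κ) (s := s)
      (by nlinarith [mul_nonneg hκ.le hs])
    have h₂ := hasDerivAt_add_mul_rpow_neg_half (p := α') (q := κ) (s := s)
      (by nlinarith [mul_nonneg hκ.le hs])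
    exact ((h₁.const_add C).sub (h₂.const_mul 2)).congr_deriv (by ring)
  have hφ' : ContinuousAt φ' 0 := by
    have h₁ : α + 2 * κ * 0 ≠ 0 := by simpa using hα.ne'
    have h₂ : α' + κ * 0 ≠ 0 := by simpa using (hα.trans hαα').ne'
    fun_prop (disch := exact Or.inl ‹_›)
  have hφ'0 : φ' 0 < 0 := by
    have := Real.rpow_lt_rpow_of_neg hα hαα' (by norm_num : -(3 : ℝ) / 2 < 0)
    simp only [φ', mul_zero, add_zero]
    exact mul_neg_of_pos_of_neg hκ (by linarith)
  have h2 : deriv (deriv f) 0 < 0 := by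
    rw [hfφ, deriv_deriv_comp_sq_zero hφ hφ']
    linarith
  refine ⟨h2, not_isLocalMin_of_deriv_deriv_neg h2 ?_ ?_⟩
  · simp [hfφ, deriv_comp_sq hφ]
  · rw [hfφ]
    exact (hφ _ (sq_nonneg 0)).comp_sq.continuousAt

theorem mul_lt_add_of_eq_critical_radius {c r : ℝ} (hc : 0 < c)
    (hden : (1 + c) ^ ((1 : ℝ) / 3) < 2 * c ^ ((1 : ℝ) / 3))
    (hr : r = c * ((1 + c) ^ ((1 : ℝ) / 3) - c ^ ((1 : ℝ) / 3)) /
      (2 * c ^ ((1 : ℝ) / 3) - (1 + c) ^ ((1 : ℝ) / 3))) :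
    c * r < c + r := by
  set x := c ^ ((1 : ℝ) / 3)
  set y := (1 + c) ^ ((1 : ℝ) / 3)
  have hx : 0 < x := by positivity
  have hxy : x < y := Real.rpow_lt_rpow hc.le (by linarith) (by norm_num)
  have hx3 : x ^ 3 = c := by
    rw [← Real.rpow_natCast, ← Real.rpow_mul hc.le]; norm_num
  have hy3 : y ^ 3 = 1 + c := by
    rw [← Real.rpow_natCast, ← Real.rpow_mul (by linarith)]; norm_num
  have hr' : r * (2 * x - y) = c * (y - x) := by
    rw [hr, div_mul_cancel₀ _ (by linarith)]
  have key : (c + r - c * r) * (2 * x - y) = x ^ 4 * y * (y - x) * (y + x) := by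
    linear_combination (1 - c) * hr' - x ^ 4 * hy3 - (c * (x - y) + x - x ^ 3 * y) * hx3
  have hy : 0 < y := hx.trans hxy
  have hprod : 0 < (c + r - c * r) * (2 * x - y) := by
    rw [key]
    exact mul_pos (mul_pos (by positivity) (sub_pos.2 hxy)) (by positivity)
  linarith [pos_of_mul_pos_left hprod (by linarith)]

noncomputable def mmdObjective {d : ℕ} (σ ε : ℝ) (astar a : EuclideanSpace ℝ (Fin d)) : ℝ :=
  (((1 / σ ^ 2) • ((2 : ℝ) • vecMulVec a a + (2 * ε ^ 2) • 1) + 1).det) ^ (-(1 : ℝ) / 2)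
  + (((1 / σ ^ 2) • ((2 : ℝ) • vecMulVec astar astar + (2 * ε ^ 2) • 1) + 1).det) ^ (-(1 : ℝ) / 2)
  - 2 * (((1 / σ ^ 2) • (vecMulVec a a + vecMulVec astar astar + (2 * ε ^ 2) • 1) + 1).det)
    ^ (-(1 : ℝ) / 2)

theorem EuclideanSpace.dotProduct_self_eq_norm_sq {ι : Type*} [Fintype ι]
    (x : EuclideanSpace ℝ ι) : x ⬝ᵥ x = ‖x‖ ^ 2 := by
  rw [← real_inner_self_eq_norm_sq, EuclideanSpace.inner_eq_star_dotProduct, star_trivial]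

theorem mmdObjective_add_smul_of_orthogonal {d : ℕ} (hd : 2 ≤ d) {σ : ℝ} (hσ : σ ≠ 0) {ε c : ℝ}
    (hc : c = 2 * ε ^ 2 + σ ^ 2) {astar a : EuclideanSpace ℝ (Fin d)} (hastar : ‖astar‖ = 1)
    (horth : a ⬝ᵥ astar = 0) :
    ∃ C p, 0 < p ∧ ∀ t : ℝ, mmdObjective σ ε astar (a + t • astar) =
      C + (p * (c * (c + 2 * ‖a‖ ^ 2)) + 2 * (p * c) * t ^ 2) ^ (-(1 : ℝ) / 2)
        - 2 * (p * ((c + ‖a‖ ^ 2) * (c + 1)) + p * c * t ^ 2) ^ (-(1 : ℝ) / 2) := by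
  have hc0 : 0 < c := by rw [hc]; positivity
  have hβ : 1 / σ ^ 2 * (2 * ε ^ 2) + 1 = c / σ ^ 2 := by rw [hc]; field_simp
  have hβ0 : 1 / σ ^ 2 * (2 * ε ^ 2) + 1 ≠ 0 := by rw [hβ]; positivity
  have hd' : 2 ≤ Fintype.card (Fin d) := by simpa using hd
  have hstar : astar ⬝ᵥ astar = 1 := by
    rw [EuclideanSpace.dotProduct_self_eq_norm_sq, hastar, one_pow]
  have hself (t : ℝ) :
      WithLp.ofLp (a + t • astar) ⬝ᵥ WithLp.ofLp (a + t • astar) = ‖a‖ ^ 2 + t ^ 2 := by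
    simp only [WithLp.ofLp_add, WithLp.ofLp_smul, add_dotProduct, dotProduct_add, smul_dotProduct,
      dotProduct_smul, dotProduct_comm astar.ofLp a.ofLp, horth, hstar,
      EuclideanSpace.dotProduct_self_eq_norm_sq, smul_eq_mul]
    ring
  have hcross (t : ℝ) : (a + t • astar) ⬝ᵥ astar = t := by
    simp only [WithLp.ofLp_add, WithLp.ofLp_smul, add_dotProduct, smul_dotProduct, horth, hstar,
      smul_eq_mul, zero_add, mul_one]
  obtain ⟨m, rfl⟩ := Nat.exists_eq_add_of_le' hd
  refine ⟨(((1 / σ ^ 2) • ((2 : ℝ) • vecMulVec astar astar + (2 * ε ^ 2) • 1) + 1).det)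
    ^ (-(1 : ℝ) / 2), (c / σ ^ 2) ^ m / σ ^ 4, by positivity, fun t => ?_⟩
  rw [mmdObjective, det_smul_vecMulVec_add_smul_one_add_one hβ0 hd',
    det_smul_vecMulVec_add_vecMulVec_add_smul_one_add_one hβ0 hd', hβ, hself, hcross, hstar,
    Fintype.card_fin, Nat.add_sub_cancel, show m + 2 - 1 = m + 1 by omega]
  have h₁ : (c / σ ^ 2) ^ (m + 1) * (c / σ ^ 2 + 1 / σ ^ 2 * 2 * (‖a‖ ^ 2 + t ^ 2)) =
      (c / σ ^ 2) ^ m / σ ^ 4 * (c * (c + 2 * ‖a‖ ^ 2))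
        + 2 * ((c / σ ^ 2) ^ m / σ ^ 4 * c) * t ^ 2 := by
    rw [pow_succ]
    field_simp
    ring
  have h₃ : (c / σ ^ 2) ^ m * ((c / σ ^ 2 + 1 / σ ^ 2 * (‖a‖ ^ 2 + t ^ 2))
        * (c / σ ^ 2 + 1 / σ ^ 2 * 1) - (1 / σ ^ 2) ^ 2 * t ^ 2) =
      (c / σ ^ 2) ^ m / σ ^ 4 * ((c + ‖a‖ ^ 2) * (c + 1))
        + (c / σ ^ 2) ^ m / σ ^ 4 * c * t ^ 2 := by
    field_simp
    ring
  rw [h₁, h₃]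
  ring

theorem mmd_covariance_strict_saddle_general (d : ℕ) (hd : 2 ≤ d) (σ : ℝ) (hσ : 0 < σ)
    (ε : ℝ) (astar : EuclideanSpace ℝ (Fin d)) (hastar : ‖astar‖ = 1)
    (c : ℝ) (hc : c = 2 * ε ^ 2 + σ ^ 2)
    (hden : (1 + c) ^ ((1 : ℝ) / 3) < 2 * c ^ ((1 : ℝ) / 3))
    (g : EuclideanSpace ℝ (Fin d) → ℝ)
    (hg : g = fun a : EuclideanSpace ℝ (Fin d) =>
      (((1 / σ ^ 2) • ((2 : ℝ) • vecMulVec a a + (2 * ε ^ 2) • 1) + 1).det) ^ (-(1 : ℝ) / 2)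
      + (((1 / σ ^ 2) • ((2 : ℝ) • vecMulVec astar astar + (2 * ε ^ 2) • 1) + 1).det) ^ (-(1 : ℝ) / 2)
      - 2 * (((1 / σ ^ 2) • (vecMulVec a a + vecMulVec astar astar + (2 * ε ^ 2) • 1) + 1).det) ^ (-(1 : ℝ) / 2))
    (a : EuclideanSpace ℝ (Fin d)) (horth : a ⬝ᵥ astar = 0)
    (hnorm : ‖a‖ ^ 2 = c * ((1 + c) ^ ((1 : ℝ) / 3) - c ^ ((1 : ℝ) / 3)) /
      (2 * c ^ ((1 : ℝ) / 3) - (1 + c) ^ ((1 : ℝ) / 3))) :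
    deriv (deriv (fun t : ℝ => g (a + t • astar))) 0 < 0 ∧ ¬ IsLocalMin g a := by
  obtain rfl : g = mmdObjective σ ε astar := hg
  have hc0 : 0 < c := by rw [hc]; positivity
  have hcrit : c * ‖a‖ ^ 2 < c + ‖a‖ ^ 2 := mul_lt_add_of_eq_critical_radius hc0 hden hnorm
  obtain ⟨C, p, hp, hline⟩ := mmdObjective_add_smul_of_orthogonal hd hσ.ne' hc hastar horth
  obtain ⟨hsecond, hnotmin⟩ := deriv_deriv_neg_and_not_isLocalMin_of_inv_sqrt (by positivity)
    (by nlinarith [mul_lt_mul_of_pos_left hcrit hp]) (by positivity) hline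
  refine ⟨hsecond, fun hmin => hnotmin ?_⟩
  exact IsLocalMin.comp_continuous (g := fun t : ℝ => a + t • astar) (b := 0)
    (by simpa using hmin) (by fun_prop)

theorem mmd_covariance_strict_saddle (d : ℕ) (hd : 2 ≤ d) (σ : ℝ) (hσ : 0 < σ)
    (ε : ℝ) (hε : 0 ≤ ε) (astar : EuclideanSpace ℝ (Fin d)) (hastar : ‖astar‖ = 1)
    (c : ℝ) (hc : c = 2 * ε ^ 2 + σ ^ 2)
    (hden : (1 + c) ^ ((1 : ℝ) / 3) < 2 * c ^ ((1 : ℝ) / 3))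
    (g : EuclideanSpace ℝ (Fin d) → ℝ)
    (hg : g = fun a : EuclideanSpace ℝ (Fin d) =>
      (((1 / σ ^ 2) • ((2 : ℝ) • vecMulVec a a + (2 * ε ^ 2) • 1) + 1).det) ^ (-(1 : ℝ) / 2)
      + (((1 / σ ^ 2) • ((2 : ℝ) • vecMulVec astar astar + (2 * ε ^ 2) • 1) + 1).det) ^ (-(1 : ℝ) / 2)
      - 2 * (((1 / σ ^ 2) • (vecMulVec a a + vecMulVec astar astar + (2 * ε ^ 2) • 1) + 1).det) ^ (-(1 : ℝ) / 2))
    (a : EuclideanSpace ℝ (Fin d)) (horth : a ⬝ᵥ astar = 0)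
    (hnorm : ‖a‖ ^ 2 = c * ((1 + c) ^ ((1 : ℝ) / 3) - c ^ ((1 : ℝ) / 3)) /
      (2 * c ^ ((1 : ℝ) / 3) - (1 + c) ^ ((1 : ℝ) / 3))) :
    deriv (deriv (fun t : ℝ => g (a + t • astar))) 0 < 0 ∧ ¬ IsLocalMin g a :=
  mmd_covariance_strict_saddle_general d hd σ hσ ε astar hastar c hc hden g hg a horth hnorm
end
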